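/- Two-component sum decomposition of conditional satisfiability: a tie (φ, Φ, Γ) is satisfiable in the class F +ᵃ G iff there exist Φ₀, Φ₁ ⊆ Sub(φ) with Φ = Φ₀ ∪ Φ₁, such that (φ, Φ₀, Γ ∪ᵃ Φ₁) is satisfiable in F and (φ, Φ₁, Γ) is satisfiable in G. -/

import Mathlib

/-!
Points of `G` see nothing of `F` in `F +ᵃ G`, so truth at a `G`-point is truth in `G`. At an
`F`-point, a formula `◇_a α` is witnessed inside `G` exactly when `α` is satisfiable in `G`; the
condition `Γ ∪ᵃ Φ₁`, with `Φ₁` the set of subformulas satisfiable in `G`, records precisely these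
witnesses, so truth at an `F`-point is conditional truth in `F` under `Γ ∪ᵃ Φ₁`.
-/

universe u

/-- Modal formulas over a set `A` of modality indices. -/
inductive MF (A : Type*) : Type _ where
  | bot : MF A
  | var : ℕ → MF A
  | imp : MF A → MF A → MF A
  | dia : A → MF A → MF A

/-- Truth at `w` under the condition `Γ` in the model `(R, θ)`. -/
def csat {A W : Type*} (R : A → W → W → Prop) (θ : ℕ → W → Prop)
    (Γ : A → Set (MF A)) : MF A → W → Prop
  | .bot, _ => False
  | .var n, w => θ n w
  | .imp φ ψ, w => csat R θ Γ φ w → csat R θ Γ ψ w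
  | .dia a φ, w => φ ∈ Γ a ∨ ∃ v, R a w v ∧ csat R θ Γ φ v

/-- The set of subformulas of a modal formula. -/
def subf {A : Type*} : MF A → Set (MF A)
  | .bot => {.bot}
  | .var n => {.var n}
  | .imp φ ψ => insert (.imp φ ψ) (subf φ ∪ subf ψ)
  | .dia a φ => insert (.dia a φ) (subf φ)

/-- The subformulas of `φ` satisfiable in the model `(R, θ)` under condition `Γ`. -/
def satSet {A W : Type*} (R : A → W → W → Prop) (θ : ℕ → W → Prop)
    (Γ : A → Set (MF A)) (φ : MF A) : Set (MF A) :=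
  {ψ ∈ subf φ | ∃ v, csat R θ Γ ψ v}

/-- An A-frame: a carrier with an A-indexed family of binary relations. -/
structure Frame (A : Type) : Type (u + 1) where
  W : Type u
  R : A → W → W → Prop

/-- The tie `(φ, Φ, Γ)` is satisfiable in a class `𝒢` of frames. -/
def TieSat {A : Type} (𝒢 : Set (Frame.{u} A)) (φ : MF A) (Φ : Set (MF A))
    (Γ : A → Set (MF A)) : Prop :=
  ∃ F ∈ 𝒢, ∃ θ : ℕ → F.W → Prop, Φ = satSet F.R θ Γ φ

/-- The frame `F +ᵃ G`: the disjoint union of `F` and `G`, with additionally every point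
of `F` related by `R_a` to every point of `G`. -/
def plusFrame {A : Type} (F G : Frame.{u} A) (a : A) : Frame.{u} A where
  W := F.W ⊕ G.W
  R := fun b x y =>
    match x, y with
    | .inl w, .inl v => F.R b w v
    | .inr w, .inr v => G.R b w v
    | .inl _, .inr _ => b = a
    | .inr _, .inl _ => False

/-- `Γ ∪ᵃ Ψ`: the condition `Γ` augmented at coordinate `a` by the set `Ψ`. -/
def condUnion {A : Type} (Γ : A → Set (MF A)) (a : A) (Ψ : Set (MF A)) :
    A → Set (MF A) :=
  fun b => Γ b ∪ {ψ | b = a ∧ ψ ∈ Ψ}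

lemma subf_self {A : Type*} (φ : MF A) : φ ∈ subf φ := by
  cases φ <;> simp [subf]

lemma subf_subset_of_mem {A : Type*} {φ ψ : MF A} (h : ψ ∈ subf φ) : subf ψ ⊆ subf φ := by
  induction φ with
  | bot | var n => simp only [subf, Set.mem_singleton_iff] at h; rw [h]
  | imp α β ihα ihβ =>
    simp only [subf, Set.mem_insert_iff, Set.mem_union] at h
    rcases h with rfl | h | h
    · exact subset_rfl
    · exact (ihα h).trans fun x hx => by simp [subf, hx]
    · exact (ihβ h).trans fun x hx => by simp [subf, hx]
  | dia b α ih =>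
    simp only [subf, Set.mem_insert_iff] at h
    rcases h with rfl | h
    · exact subset_rfl
    · exact (ih h).trans fun x hx => by simp [subf, hx]

section plusFrame

variable {A : Type} {F G : Frame.{u} A} {a : A}
  (θF : ℕ → F.W → Prop) (θG : ℕ → G.W → Prop) (Γ : A → Set (MF A))

lemma csat_plusFrame_inr (ψ : MF A) (w : G.W) :
    csat (plusFrame F G a).R (fun n => Sum.elim (θF n) (θG n)) Γ ψ (.inr w) ↔
      csat G.R θG Γ ψ w := by
  induction ψ generalizing w with
  | bot | var n => rfl
  | imp α β ihα ihβ => exact imp_congr (ihα w) (ihβ w)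
  | dia b α ih =>
    refine or_congr Iff.rfl ⟨?_, fun ⟨v, hR, hc⟩ => ⟨.inr v, hR, (ih v).2 hc⟩⟩
    rintro ⟨v | v, hR, hc⟩
    · exact hR.elim
    · exact ⟨v, hR, (ih v).1 hc⟩

lemma csat_plusFrame_inl {φ ψ : MF A} (hψ : ψ ∈ subf φ) (w : F.W) :
    csat (plusFrame F G a).R (fun n => Sum.elim (θF n) (θG n)) Γ ψ (.inl w) ↔
      csat F.R θF (condUnion Γ a (satSet G.R θG Γ φ)) ψ w := by
  induction ψ generalizing w with
  | bot | var n => rfl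
  | imp α β ihα ihβ =>
    have hα : α ∈ subf φ := subf_subset_of_mem hψ (by simp [subf, subf_self])
    have hβ : β ∈ subf φ := subf_subset_of_mem hψ (by simp [subf, subf_self])
    exact imp_congr (ihα hα w) (ihβ hβ w)
  | dia b α ih =>
    have hα : α ∈ subf φ := subf_subset_of_mem hψ (by simp [subf, subf_self])
    simp only [csat, condUnion, satSet, Set.mem_union, Set.mem_ofPred_eq]
    constructor
    · rintro (h | ⟨v | v, hR, hc⟩)
      · exact .inl (.inl h)
      · exact .inr ⟨v, hR, (ih hα v).1 hc⟩
      · exact .inl (.inr ⟨hR, hα, v, (csat_plusFrame_inr θF θG Γ α v).1 hc⟩)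
    · rintro ((h | ⟨rfl, -, v, hc⟩) | ⟨v, hR, hc⟩)
      · exact .inl h
      · exact .inr ⟨.inr v, rfl, (csat_plusFrame_inr θF θG Γ α v).2 hc⟩
      · exact .inr ⟨.inl v, hR, (ih hα v).2 hc⟩

lemma satSet_plusFrame (φ : MF A) :
    satSet (plusFrame F G a).R (fun n => Sum.elim (θF n) (θG n)) Γ φ =
      satSet F.R θF (condUnion Γ a (satSet G.R θG Γ φ)) φ ∪ satSet G.R θG Γ φ := by
  ext ψ
  simp only [satSet, Set.mem_ofPred_eq, Set.mem_union]
  constructor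
  · rintro ⟨hψ, v | v, hc⟩
    · exact .inl ⟨hψ, v, (csat_plusFrame_inl θF θG Γ hψ v).1 hc⟩
    · exact .inr ⟨hψ, v, (csat_plusFrame_inr θF θG Γ ψ v).1 hc⟩
  · rintro (⟨hψ, v, hc⟩ | ⟨hψ, v, hc⟩)
    · exact ⟨hψ, .inl v, (csat_plusFrame_inl θF θG Γ hψ v).2 hc⟩
    · exact ⟨hψ, .inr v, (csat_plusFrame_inr θF θG Γ ψ v).2 hc⟩

end plusFrame

theorem stmt_13_general {A : Type} (ℱ 𝒢 : Set (Frame.{u} A)) (a : A)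
    (φ : MF A) (Φ : Set (MF A)) (Γ : A → Set (MF A)) :
    TieSat {H | ∃ F ∈ ℱ, ∃ G ∈ 𝒢, H = plusFrame F G a} φ Φ Γ ↔
      ∃ Φ₀ Φ₁ : Set (MF A), Φ₀ ⊆ subf φ ∧ Φ₁ ⊆ subf φ ∧ Φ = Φ₀ ∪ Φ₁ ∧
        TieSat ℱ φ Φ₀ (condUnion Γ a Φ₁) ∧ TieSat 𝒢 φ Φ₁ Γ := by
  constructor
  · rintro ⟨_, ⟨F, hF, G, hG, rfl⟩, θ, rfl⟩
    obtain ⟨θF, θG, rfl⟩ : ∃ (θF : ℕ → F.W → Prop) (θG : ℕ → G.W → Prop),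
        θ = fun n => Sum.elim (θF n) (θG n) :=
      ⟨_, _, funext fun n => (Sum.elim_comp_inl_inr (θ n)).symm⟩
    exact ⟨_, _, fun _ h => h.1, fun _ h => h.1, satSet_plusFrame θF θG Γ φ,
      ⟨F, hF, θF, rfl⟩, ⟨G, hG, θG, rfl⟩⟩
  · rintro ⟨Φ₀, Φ₁, -, -, rfl, ⟨F, hF, θF, rfl⟩, ⟨G, hG, θG, rfl⟩⟩
    exact ⟨plusFrame F G a, ⟨F, hF, G, hG, rfl⟩, _, (satSet_plusFrame θF θG Γ φ).symm⟩

/-- Two-component sum decomposition of conditional satisfiability. -/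
theorem stmt_13 {A : Type} (ℱ 𝒢 : Set (Frame.{u} A)) (a : A)
    (φ : MF A) (Φ : Set (MF A)) (hΦ : Φ ⊆ subf φ) (Γ : A → Set (MF A)) :
    TieSat {H | ∃ F ∈ ℱ, ∃ G ∈ 𝒢, H = plusFrame F G a} φ Φ Γ ↔
      ∃ Φ₀ Φ₁ : Set (MF A), Φ₀ ⊆ subf φ ∧ Φ₁ ⊆ subf φ ∧ Φ = Φ₀ ∪ Φ₁ ∧
        TieSat ℱ φ Φ₀ (condUnion Γ a Φ₁) ∧ TieSat 𝒢 φ Φ₁ Γ :=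
  stmt_13_general ℱ 𝒢 a φ Φ Γ
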